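/- Let 0 < ρ < 1 and c ≥ 0. Define ψ(λ) = (1/((c+1)B(1-ρ,ρ))) ∫₀¹ u^{-ρ}(1-u)^{ρ-1} φ(λu) du where φ(λ) = 1 - (λ/(λ+1))^ρ. Then ψ(λ) = (1/(c+1))·(1 - I_{λ/(λ+1)}(ρ, 1-ρ)), where I_x(a,b) = B_x(a,b)/B(a,b) is the regularized incomplete Beta function with B_x(a,b) = ∫₀^x t^{a-1}(1-t)^{b-1} dt. -/

import Mathlib

open Real MeasureTheory Filter Set

noncomputable def Beta (a b : ℝ) : ℝ := ∫ t in (0:ℝ)..1, t ^ (a - 1) * (1 - t) ^ (b - 1)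

/-- Incomplete Beta function B_x(a,b) = ∫₀^x t^{a-1}(1-t)^{b-1} dt. -/
noncomputable def incBeta (a b x : ℝ) : ℝ := ∫ t in (0:ℝ)..x, t ^ (a - 1) * (1 - t) ^ (b - 1)

/-- Regularized incomplete Beta function I_x(a,b) = B_x(a,b)/B(a,b). -/
noncomputable def regIncBeta (a b x : ℝ) : ℝ := incBeta a b x / Beta a b

/-!
Split `φ(λu) = 1 - (λu/(λu+1))^ρ`. The constant part integrates against the density to
`B(1-ρ,ρ) = B(ρ,1-ρ)`. In the other part substitute `t = x(1-u)` with `x = λ/(λ+1)`: since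
`1 - t = (λu+1)/(λ+1)`, the powers of `u` cancel and the integrand becomes
`x · t^(ρ-1) (1-t)^(-ρ)`, so this part integrates to `B_x(ρ,1-ρ)`.
-/

lemma intervalIntegrable_beta_integrand {a b : ℝ} (ha : 0 < a) (hb : 0 < b) :
    IntervalIntegrable (fun t : ℝ => t ^ (a - 1) * (1 - t) ^ (b - 1)) volume 0 1 := by
  refine (Complex.betaIntegral_convergent (u := a) (v := b) (by simpa) (by simpa)).norm.congr_uIoo
    fun t ht => ?_
  rw [uIoo_of_le zero_le_one] at ht
  have h1t : (1 - (t : ℂ)) = ((1 - t : ℝ) : ℂ) := by push_cast; rfl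
  simp only [norm_mul, h1t, Complex.norm_cpow_eq_rpow_re_of_pos ht.1,
    Complex.norm_cpow_eq_rpow_re_of_pos (sub_pos.2 ht.2)]
  simp

lemma beta_comm (a b : ℝ) : Beta a b = Beta b a := by
  have reflect := intervalIntegral.integral_comp_sub_left
    (fun t : ℝ => t ^ (b - 1) * (1 - t) ^ (a - 1)) (a := 0) (b := 1) 1
  simp only [sub_sub_cancel, sub_zero, sub_self] at reflect
  simp only [Beta, ← reflect, mul_comm]

lemma beta_pos {a b : ℝ} (ha : 0 < a) (hb : 0 < b) : 0 < Beta a b :=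
  intervalIntegral.intervalIntegral_pos_of_pos_on (intervalIntegrable_beta_integrand ha hb)
    (fun t ht => by have := sub_pos.2 ht.2; have := ht.1; positivity) zero_lt_one

lemma beta_density_mul_rpow_div_eq_comp_sub_mul {ρ l u : ℝ} (hl : 0 < l) (hu : 0 < u)
    (hu1 : u ≤ 1) :
    u ^ (-ρ) * (1 - u) ^ (ρ - 1) * (l * u / (l * u + 1)) ^ ρ =
      l / (l + 1) * ((l / (l + 1) - l / (l + 1) * u) ^ (ρ - 1) *
        (1 - (l / (l + 1) - l / (l + 1) * u)) ^ (-ρ)) := by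
  have hl1 : 0 < l + 1 := by linarith
  have hlu : 0 < l * u + 1 := by positivity
  have h1u : 0 ≤ 1 - u := by linarith
  rw [show l / (l + 1) - l / (l + 1) * u = l * (1 - u) / (l + 1) by ring,
    show 1 - l * (1 - u) / (l + 1) = (l * u + 1) / (l + 1) by field_simp; ring,
    div_rpow (by positivity) hl1.le, div_rpow hlu.le hl1.le, div_rpow (by positivity) hlu.le,
    mul_rpow hl.le h1u, mul_rpow hl.le hu.le, rpow_neg hu.le, rpow_neg (by positivity),
    rpow_neg hl1.le, rpow_sub_one hl.ne', rpow_sub_one hl1.ne']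
  field_simp

lemma integral_mul_rpow_div_eq_incBeta (ρ : ℝ) {l : ℝ} (hl : 0 < l) :
    ∫ u in (0:ℝ)..1, u ^ (-ρ) * (1 - u) ^ (ρ - 1) * (l * u / (l * u + 1)) ^ ρ =
      incBeta ρ (1 - ρ) (l / (l + 1)) := by
  have substitution := intervalIntegral.mul_integral_comp_sub_mul (a := 0) (b := 1)
    (f := fun t : ℝ => t ^ (ρ - 1) * (1 - t) ^ (-ρ)) (l / (l + 1)) (l / (l + 1))
  simp only [mul_zero, mul_one, sub_zero, sub_self] at substitution
  rw [incBeta, sub_sub_cancel_left, ← substitution, ← intervalIntegral.integral_const_mul]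
  refine intervalIntegral.integral_congr_ae (ae_of_all _ fun u hu => ?_)
  rw [uIoc_of_le zero_le_one] at hu
  exact beta_density_mul_rpow_div_eq_comp_sub_mul hl hu.1 hu.2

lemma integral_mul_one_sub_rpow_div_eq {ρ l : ℝ} (hρ : 0 < ρ) (hρ1 : ρ < 1) (hl : 0 ≤ l) :
    ∫ u in (0:ℝ)..1, u ^ (-ρ) * (1 - u) ^ (ρ - 1) * (1 - (l * u / (l * u + 1)) ^ ρ) =
      Beta (1 - ρ) ρ - incBeta ρ (1 - ρ) (l / (l + 1)) := by
  have density : IntervalIntegrable (fun u : ℝ => u ^ (-ρ) * (1 - u) ^ (ρ - 1)) volume 0 1 := by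
    simpa using intervalIntegrable_beta_integrand (sub_pos.2 hρ1) hρ
  have denom_pos : ∀ u ∈ uIcc (0:ℝ) 1, 0 < l * u + 1 := fun u hu => by
    rw [uIcc_of_le zero_le_one] at hu
    have := hu.1; positivity
  have mixed := density.mul_continuousOn (g := fun u => (l * u / (l * u + 1)) ^ ρ)
    (ContinuousOn.rpow_const (by fun_prop (disch := exact fun u hu => (denom_pos u hu).ne'))
      fun _ _ => Or.inr hρ.le)
  simp only [mul_one_sub]
  rw [intervalIntegral.integral_sub density mixed, Beta, sub_sub_cancel_left]
  rcases hl.eq_or_lt with rfl | hl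
  · simp [incBeta, zero_rpow hρ.ne']
  · rw [integral_mul_rpow_div_eq_incBeta ρ hl]

theorem stmt9_general (ρ c : ℝ) (hρ : 0 < ρ) (hρ1 : ρ < 1)
    (φ ψ : ℝ → ℝ)
    (hφ : ∀ l : ℝ, φ l = 1 - (l / (l + 1)) ^ ρ)
    (hψ : ∀ l : ℝ, ψ l = (1 / ((c + 1) * Beta (1 - ρ) ρ)) *
      ∫ u in (0:ℝ)..1, u ^ (-ρ) * (1 - u) ^ (ρ - 1) * φ (l * u)) :
    ∀ l : ℝ, 0 ≤ l → ψ l = (1 / (c + 1)) * (1 - regIncBeta ρ (1 - ρ) (l / (l + 1))) := by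
  intro l hl
  have hB : Beta (1 - ρ) ρ ≠ 0 := (beta_pos (sub_pos.2 hρ1) hρ).ne'
  simp only [hψ, hφ, integral_mul_one_sub_rpow_div_eq hρ hρ1 hl, regIncBeta, beta_comm ρ]
  field_simp

/-- mixing φ(λu) = 1 - (λu/(λu+1))^ρ over the Beta(1-ρ,ρ) density gives
(1/(c+1))(1 - I_{λ/(λ+1)}(ρ, 1-ρ)). -/
theorem stmt9 (ρ c : ℝ) (hρ : 0 < ρ) (hρ1 : ρ < 1) (hc : 0 ≤ c)
    (φ ψ : ℝ → ℝ)
    (hφ : ∀ l : ℝ, φ l = 1 - (l / (l + 1)) ^ ρ)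
    (hψ : ∀ l : ℝ, ψ l = (1 / ((c + 1) * Beta (1 - ρ) ρ)) *
      ∫ u in (0:ℝ)..1, u ^ (-ρ) * (1 - u) ^ (ρ - 1) * φ (l * u)) :
    ∀ l : ℝ, 0 ≤ l → ψ l = (1 / (c + 1)) * (1 - regIncBeta ρ (1 - ρ) (l / (l + 1))) :=
  stmt9_general ρ c hρ hρ1 φ ψ hφ hψ
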